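/- (Theorem 1) Let N ≥ 3 be odd and φ ∈ ℝ^N. A stationary point θ (with θ_N = 0) of F_φ is a local minimum if and only if cos s_k > 0 for all k = 1,…,N; in terms of the classification of stationary points, this holds if and only if q_k = 0 for all k = 1,…,N−1 and cos s_N > 0. -/

import Mathlib

/-!
At a stationary point the partial derivatives `sin s_{k-1} - sin s_k` vanish, so all `sin s_k`
agree and all `cos s_k` agree up to sign. Moving the configuration by `δ` changes `F` by
`∑ (cos s_k - cos (s_k + d_k))`, where the increments `d_k = δ_{k+1} - δ_k` sum to zero.

If every `cos s_k` is positive, all `s_k` agree mod `2π`, and the tangent-line bound for the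
locally concave `cos` makes each term at least `sin s_N * d_k`; these sum to zero.

If some `cos s_j ≤ 0`, stretch bond `j` by `2t` and compress its two neighbours by `t`. As every
`cos s_k ≤ |cos s_j|`, the energy changes by at most
`-2 (1 - cos t) (|cos s_j| cos t + sin s_N sin t)`, which is negative for small `t` of the sign of
`sin s_N`. The three bonds are distinct because `N ≥ 3`.
-/

open Real Filter

/-- The variable `s k = φ k + θ (k+1) - θ k` (indices cyclic mod `N`,
0-based; paper index `k` corresponds to `k-1` here, so `s_N` is `sVar` at `lastIdx`). -/
noncomputable def sVar (N : ℕ) (hN : 0 < N) (φ θ : Fin N → ℝ) (k : Fin N) : ℝ :=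
  φ k + θ ⟨((k : ℕ) + 1) % N, Nat.mod_lt _ hN⟩ - θ k

/-- The lattice Landau gauge functional / random phase XY Hamiltonian
`F_φ(θ) = Σ_k (1 - cos(φ_k + θ_{k+1} - θ_k))` with periodic boundary conditions. -/
noncomputable def Fxy (N : ℕ) (hN : 0 < N) (φ θ : Fin N → ℝ) : ℝ :=
  ∑ k : Fin N, (1 - Real.cos (sVar N hN φ θ k))

/-- The index of the fixed site (paper site `N`). -/
def lastIdx (N : ℕ) (hN : 0 < N) : Fin N :=
  ⟨N - 1, Nat.sub_lt hN Nat.one_pos⟩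

/-- `θ` is a stationary point of `F_φ` regarded as a function of the free
coordinates `θ_1, …, θ_{N-1}` (0-based: coordinates `k` with `k < N-1`),
with `θ` at `lastIdx` held fixed: all partial derivatives vanish. -/
noncomputable def IsStationaryPt (N : ℕ) (hN : 0 < N) (φ θ : Fin N → ℝ) : Prop :=
  ∀ k : Fin N, (k : ℕ) < N - 1 →
    deriv (fun t : ℝ => Fxy N hN φ (Function.update θ k t)) (θ k) = 0

/-- The `(N-1) × (N-1)` tridiagonal matrix with entries
`δ_{ij}(c_{i-1} + c_i) - δ_{i-1,j} c_{i-1} - δ_{i+1,j} c_i`, where indices are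
0-based (paper index `i` ↦ `i-1`) and `c_0 := c_N` (cyclic predecessor). -/
noncomputable def hessC (N : ℕ) (hN : 0 < N) (c : Fin N → ℝ) :
    Matrix (Fin (N - 1)) (Fin (N - 1)) ℝ :=
  Matrix.of fun i j =>
    (if i = j then
        c ⟨((i : ℕ) + (N - 1)) % N, Nat.mod_lt _ hN⟩ +
          c ⟨(i : ℕ), lt_of_lt_of_le i.isLt (Nat.sub_le N 1)⟩
      else 0)
    - (if (i : ℕ) = (j : ℕ) + 1 then c ⟨((i : ℕ) + (N - 1)) % N, Nat.mod_lt _ hN⟩ else 0)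
    - (if (j : ℕ) = (i : ℕ) + 1 then c ⟨(i : ℕ), lt_of_lt_of_le i.isLt (Nat.sub_le N 1)⟩ else 0)

/-- The Hessian of `F_φ` (with the last coordinate fixed) at a configuration `θ`. -/
noncomputable def hessAt (N : ℕ) (hN : 0 < N) (φ θ : Fin N → ℝ) :
    Matrix (Fin (N - 1)) (Fin (N - 1)) ℝ :=
  hessC N hN fun k => Real.cos (sVar N hN φ θ k)

/-- `F_φ` as a function of the free coordinates only: the coordinate at
`lastIdx` is overwritten by `0`. -/
noncomputable def FxyFixed (N : ℕ) (hN : 0 < N) (φ : Fin N → ℝ) (η : Fin N → ℝ) : ℝ :=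
  Fxy N hN φ (Function.update η (lastIdx N hN) 0)

/-- The value `σ = (Φ + 2πl - π Σ_{k=1}^{N-1} q_k) / (1 + Σ_{k=1}^{N-1} (-1)^{q_k})`. -/
noncomputable def sigmaVal (N : ℕ) (hN : 0 < N) (φ : Fin N → ℝ) (q : Fin N → ℕ) (l : ℤ) : ℝ :=
  ((∑ k, φ k) + 2 * Real.pi * (l : ℝ)
      - Real.pi * ∑ k ∈ Finset.univ.erase (lastIdx N hN), (q k : ℝ)) /
    (1 + ∑ k ∈ Finset.univ.erase (lastIdx N hN), (-1 : ℝ) ^ (q k))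

open Topology

theorem Equiv.Perm.sum_comp_sub_eq_zero {ι M : Type*} [Fintype ι] [AddCommGroup M]
    (σ : Equiv.Perm ι) (δ : ι → M) : ∑ k, (δ (σ k) - δ k) = 0 := by
  rw [Finset.sum_sub_distrib, Equiv.sum_comp σ δ, sub_self]

theorem Fintype.sum_eq_add_add {ι M : Type*} [Fintype ι] [DecidableEq ι] [AddCommMonoid M]
    {f : ι → M} {a b c : ι} (hab : a ≠ b) (hac : a ≠ c) (hbc : b ≠ c)
    (hf : ∀ x, x ≠ a → x ≠ b → x ≠ c → f x = 0) : ∑ x, f x = f a + f b + f c := by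
  rw [← Finset.sum_subset (Finset.subset_univ {a, b, c}) fun x _ hx => by
    simp only [Finset.mem_insert, Finset.mem_singleton, not_or] at hx
    exact hf x hx.1 hx.2.1 hx.2.2]
  rw [Finset.sum_insert (by simp [hab, hac]), Finset.sum_pair hbc, add_assoc]

theorem finRotate_apply_ne_self {N : ℕ} (hN : 2 ≤ N) (j : Fin N) : finRotate N j ≠ j := by
  obtain ⟨n, rfl⟩ : ∃ n, N = n + 1 := Nat.exists_eq_succ_of_ne_zero (by omega)
  intro h
  have := congrArg Fin.val h
  simp only [coe_finRotate, Fin.ext_iff, Fin.val_last] at this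
  split_ifs at this <;> omega

theorem finRotate_finRotate_ne_self {N : ℕ} (hN : 3 ≤ N) (j : Fin N) :
    finRotate N (finRotate N j) ≠ j := by
  obtain ⟨n, rfl⟩ : ∃ n, N = n + 1 := Nat.exists_eq_succ_of_ne_zero (by omega)
  intro h
  have := congrArg Fin.val h
  simp only [coe_finRotate, Fin.ext_iff, Fin.val_last] at this
  split_ifs at this <;> omega

theorem eventually_cos_add_le {x : ℝ} (hx : 0 < cos x) :
    ∀ᶠ d in 𝓝 0, cos (x + d) ≤ cos x - sin x * d := by
  set g : ℝ → ℝ := fun d => cos x - sin x * d - cos (x + d)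
  have hg' (d : ℝ) : HasDerivAt g (sin (x + d) - sin x) d := by
    have := (((hasDerivAt_id' d).const_mul (sin x)).const_sub (cos x)).sub
      ((hasDerivAt_id' d).const_add x).cos
    exact this.congr_deriv (by ring)
  have hg'' : HasDerivAt (deriv g) (cos x) 0 := by
    have := ((hasDerivAt_id (0 : ℝ)).const_add x).sin.sub_const (sin x)
    rw [show deriv g = fun d => sin (x + d) - sin x from funext fun d => (hg' d).deriv]
    simpa using this
  have hmin : IsLocalMin g 0 :=
    isLocalMin_of_deriv_deriv_pos (hg''.deriv ▸ hx) (by simp [(hg' 0).deriv])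
      (hg' 0).continuousAt
  filter_upwards [hmin] with d hd
  simpa [g] using hd

theorem frequently_one_sub_cos_mul_pos {c S : ℝ} (hc : 0 ≤ c) (hcS : c ^ 2 + S ^ 2 = 1) :
    ∃ᶠ t in 𝓝 0, 0 < (1 - cos t) * (c * cos t + S * sin t) := by
  have hsmall {t : ℝ} (ht0 : 0 < t) (ht1 : t < 1) :
      0 < 1 - cos t ∧ 0 < cos t ∧ 0 < sin t := by
    have hpi := pi_gt_three
    refine ⟨sub_pos.mpr ?_, cos_pos_of_mem_Ioo ⟨by linarith, by linarith⟩,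
      sin_pos_of_pos_of_lt_pi ht0 (by linarith)⟩
    simpa using cos_lt_cos_of_nonneg_of_le_pi le_rfl (by linarith) ht0
  have hcS' : 0 < c ∨ S ≠ 0 := by
    by_contra! h
    nlinarith [h.1.antisymm hc]
  rcases le_or_gt 0 S with hS | hS
  · refine (Eventually.frequently ?_).filter_mono nhdsWithin_le_nhds (f := 𝓝[>] 0)
    filter_upwards [Ioo_mem_nhdsGT one_pos] with t ⟨ht0, ht1⟩
    obtain ⟨h1, h2, h3⟩ := hsmall ht0 ht1
    refine mul_pos h1 ?_
    rcases hcS' with hc' | hS'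
    · nlinarith [mul_nonneg hS h3.le]
    · nlinarith [mul_pos (lt_of_le_of_ne hS hS'.symm) h3, mul_nonneg hc h2.le]
  · refine (Eventually.frequently ?_).filter_mono nhdsWithin_le_nhds (f := 𝓝[<] 0)
    filter_upwards [Ioo_mem_nhdsLT (neg_lt_zero.mpr one_pos)] with t ⟨ht1, ht0⟩
    obtain ⟨h1, h2, h3⟩ := hsmall (neg_pos.mpr ht0) (by linarith)
    rw [cos_neg] at h1 h2
    rw [sin_neg] at h3
    exact mul_pos h1 (by nlinarith [mul_nonneg hc h2.le])

section

variable {N : ℕ} {hN : 0 < N} {φ θ : Fin N → ℝ}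

theorem sVar_eq_finRotate (k : Fin N) :
    sVar N hN φ θ k = φ k + θ (finRotate N k) - θ k := by
  have := k.neZero
  have hk : (⟨((k : ℕ) + 1) % N, Nat.mod_lt _ hN⟩ : Fin N) = finRotate N k := by
    ext; simp [Fin.val_add]
  rw [sVar, hk]

theorem sVar_add (δ : Fin N → ℝ) (k : Fin N) :
    sVar N hN φ (θ + δ) k = sVar N hN φ θ k + (δ (finRotate N k) - δ k) := by
  simp only [sVar_eq_finRotate, Pi.add_apply]; ring

theorem fxy_add_sub_fxy (δ : Fin N → ℝ) :
    Fxy N hN φ (θ + δ) - Fxy N hN φ θ =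
      ∑ k, (cos (sVar N hN φ θ k) - cos (sVar N hN φ θ k + (δ (finRotate N k) - δ k))) := by
  simp only [Fxy, sVar_add, ← Finset.sum_sub_distrib]
  exact Finset.sum_congr rfl fun k _ => by ring

theorem fxy_add_const (c : ℝ) : Fxy N hN φ (θ + fun _ => c) = Fxy N hN φ θ := by
  rw [← sub_eq_zero, fxy_add_sub_fxy]
  simp

theorem hasDerivAt_fxy_update (k : Fin N) :
    HasDerivAt (fun t => Fxy N hN φ (Function.update θ k t))
      (sin (sVar N hN φ θ ((finRotate N).symm k)) - sin (sVar N hN φ θ k)) (θ k) := by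
  set e : Fin N → ℝ := Pi.single k 1
  have hupd (t : ℝ) : Function.update θ k t = θ + (t - θ k) • e := by
    ext i; rcases eq_or_ne i k with rfl | hi <;> simp [e, *]
  have hterm (j : Fin N) : HasDerivAt
      (fun t => 1 - cos (sVar N hN φ θ j + (t - θ k) * (e (finRotate N j) - e j)))
      (sin (sVar N hN φ θ j) * (e (finRotate N j) - e j)) (θ k) := by
    have := (((hasDerivAt_id (θ k)).sub_const (θ k)).mul_const
      (e (finRotate N j) - e j)).const_add (sVar N hN φ θ j) |>.cos.const_sub 1
    simpa using this
  have hfun : (fun t => Fxy N hN φ (Function.update θ k t)) =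
      fun t => ∑ j, (1 - cos (sVar N hN φ θ j + (t - θ k) * (e (finRotate N j) - e j))) := by
    ext t; simp only [hupd, Fxy, sVar_add, Pi.smul_apply, smul_eq_mul, mul_sub]
  have hval : ∑ j, sin (sVar N hN φ θ j) * (e (finRotate N j) - e j) =
      sin (sVar N hN φ θ ((finRotate N).symm k)) - sin (sVar N hN φ θ k) := by
    simp only [mul_sub, Finset.sum_sub_distrib]
    rw [← (finRotate N).symm.sum_comp]
    simp only [Equiv.apply_symm_apply, e, Pi.single_apply, mul_ite, mul_one, mul_zero,
      Finset.sum_ite_eq', Finset.mem_univ, if_true]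
  rw [hfun, ← hval]
  exact HasDerivAt.fun_sum fun j _ => hterm j

theorem IsStationaryPt.sin_sVar_eq (hstat : IsStationaryPt N hN φ θ) (k : Fin N) :
    sin (sVar N hN φ θ k) = sin (sVar N hN φ θ (lastIdx N hN)) := by
  have step (k : Fin N) (hk : (k : ℕ) < N - 1) :
      sin (sVar N hN φ θ ((finRotate N).symm k)) = sin (sVar N hN φ θ k) :=
    sub_eq_zero.mp ((hasDerivAt_fxy_update k).deriv ▸ hstat k hk)
  obtain ⟨n, rfl⟩ : ∃ n, N = n + 1 := Nat.exists_eq_succ_of_ne_zero hN.ne'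
  change sin (sVar _ hN φ θ k) = sin (sVar _ hN φ θ (Fin.last n))
  induction k using Fin.induction with
  | zero =>
    rcases Nat.eq_zero_or_pos n with rfl | hn
    · rfl
    · rw [← step 0 (by simpa using hn), (Equiv.symm_apply_eq _).mpr finRotate_last.symm]
  | succ i ih =>
    rcases eq_or_ne i.succ (Fin.last n) with hi | hi
    · rw [hi]
    · have hlt : (i.succ : ℕ) < n + 1 - 1 := by simpa using Fin.val_lt_last hi
      rw [← step _ hlt, ← ih]
      congr 2
      exact (Equiv.symm_apply_eq _).mpr (finRotate_of_lt i.isLt).symm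

theorem IsStationaryPt.cos_sq_sVar_eq (hstat : IsStationaryPt N hN φ θ) (k : Fin N) :
    cos (sVar N hN φ θ k) ^ 2 = cos (sVar N hN φ θ (lastIdx N hN)) ^ 2 := by
  rw [cos_sq', cos_sq', hstat.sin_sVar_eq k]

theorem IsStationaryPt.cos_sVar_eq_of_pos (hstat : IsStationaryPt N hN φ θ) {k : Fin N}
    (hk : 0 < cos (sVar N hN φ θ k)) (hlast : 0 < cos (sVar N hN φ θ (lastIdx N hN))) :
    cos (sVar N hN φ θ k) = cos (sVar N hN φ θ (lastIdx N hN)) :=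
  (pow_left_inj₀ hk.le hlast.le two_ne_zero).mp (hstat.cos_sq_sVar_eq k)

theorem IsStationaryPt.isLocalMin_fxy (hstat : IsStationaryPt N hN φ θ)
    (hpos : ∀ k, 0 < cos (sVar N hN φ θ k)) : IsLocalMin (Fxy N hN φ) θ := by
  set s := sVar N hN φ θ (lastIdx N hN)
  have hcos (k : Fin N) : cos (sVar N hN φ θ k) = cos s :=
    hstat.cos_sVar_eq_of_pos (hpos k) (hpos _)
  set d : (Fin N → ℝ) → Fin N → ℝ := fun ψ k => (ψ - θ) (finRotate N k) - (ψ - θ) k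
  have hd (k : Fin N) : Tendsto (fun ψ => d ψ k) (𝓝 θ) (𝓝 0) := by
    have : Continuous fun ψ => d ψ k := by fun_prop
    simpa [d] using this.tendsto θ
  have htangent : ∀ᶠ ψ in 𝓝 θ, ∀ k, cos (s + d ψ k) ≤ cos s - sin s * d ψ k :=
    eventually_all.2 fun k => hd k |>.eventually <| eventually_cos_add_le <| hpos _
  filter_upwards [htangent] with ψ hψ
  have hdiff := fxy_add_sub_fxy (hN := hN) (φ := φ) (θ := θ) (ψ - θ)
  rw [add_sub_cancel] at hdiff
  rw [← sub_nonneg, hdiff]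
  calc (0 : ℝ) = ∑ k, sin s * d ψ k := by
        rw [← Finset.mul_sum, Equiv.Perm.sum_comp_sub_eq_zero, mul_zero]
    _ ≤ _ := Finset.sum_le_sum fun k _ => by
      rw [cos_add, hcos k, hstat.sin_sVar_eq k, ← cos_add]
      linarith [hψ k]

theorem IsLocalMin.fxyFixed (hmin : IsLocalMin (Fxy N hN φ) θ) (hlast : θ (lastIdx N hN) = 0) :
    IsLocalMin (FxyFixed N hN φ) θ := by
  have hθ : Function.update θ (lastIdx N hN) 0 = θ := by rw [← hlast, Function.update_eq_self]
  have hmin' : IsLocalMin (Fxy N hN φ) (Function.update θ (lastIdx N hN) 0) := by rwa [hθ]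
  exact hmin'.comp_continuous (g := fun η => Function.update η (lastIdx N hN) 0) (by fun_prop)

theorem IsLocalMin.fxy_line (hmin : IsLocalMin (FxyFixed N hN φ) θ)
    (hlast : θ (lastIdx N hN) = 0) (a : Fin N → ℝ) :
    IsLocalMin (fun t : ℝ => Fxy N hN φ (θ + t • a)) 0 := by
  -- Subtracting the constant `a (lastIdx N hN)` keeps the fixed coordinate at `0`
  -- without changing `Fxy`.
  set γ : ℝ → Fin N → ℝ := fun t => θ + t • (a - fun _ => a (lastIdx N hN))
  have hγ (t : ℝ) : FxyFixed N hN φ (γ t) = Fxy N hN φ (θ + t • a) := by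
    have hlast_γ : γ t (lastIdx N hN) = 0 := by simp [γ, hlast]
    rw [FxyFixed, ← hlast_γ, Function.update_eq_self]
    convert fxy_add_const (-(t * a (lastIdx N hN))) using 2
    ext i
    simp only [γ, Pi.add_apply, Pi.smul_apply, Pi.sub_apply, smul_eq_mul]
    ring
  have hloc : IsLocalMin (FxyFixed N hN φ ∘ γ) 0 :=
    IsLocalMin.comp_continuous (by simpa [γ] using hmin) (by fun_prop)
  simpa only [Function.comp_def, hγ] using hloc

theorem IsStationaryPt.fxy_stretch_sub_le (hstat : IsStationaryPt N hN φ θ) (hN3 : 3 ≤ N)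
    (j : Fin N) (hub : ∀ k, cos (sVar N hN φ θ k) ≤ -cos (sVar N hN φ θ j)) (t : ℝ) :
    Fxy N hN φ (θ + t • (Pi.single (finRotate N j) 1 - Pi.single j 1)) - Fxy N hN φ θ ≤
      -2 * ((1 - cos t) * (-cos (sVar N hN φ θ j) * cos t +
        sin (sVar N hN φ θ (lastIdx N hN)) * sin t)) := by
  rw [fxy_add_sub_fxy]
  set σ := finRotate N
  set p := σ.symm j
  have hσj : σ j ≠ j := finRotate_apply_ne_self (by omega) j
  have hσσj : σ (σ j) ≠ j := finRotate_finRotate_ne_self hN3 j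
  have hσp : σ p = j := σ.apply_symm_apply j
  have hpj : p ≠ j := fun h => hσj (by rw [h] at hσp; exact hσp)
  have hpq : p ≠ σ j := fun h => hσσj (by rw [h] at hσp; exact hσp)
  rw [Fintype.sum_eq_add_add hpj hpq hσj.symm]
  · simp only [Pi.sub_apply, Pi.smul_apply, smul_eq_mul, Pi.single_apply, σ.injective.eq_iff,
      hσp, hσj, hσσj, hpj, hpq, hσj.symm, if_true, if_false]
    rw [show t * (0 - 1) - t * (0 - 0) = -t by ring, show t * (1 - 0) - t * (0 - 1) = 2 * t by ring,
      show t * (0 - 0) - t * (1 - 0) = -t by ring]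
    simp only [cos_add, cos_neg, sin_neg, cos_two_mul, sin_two_mul, hstat.sin_sVar_eq]
    -- the right side minus the left side is `(1 - cos t) (-2 cos s_j - cos s_p - cos s_{σ j})`
    have hneighbours : 0 ≤ -2 * cos (sVar N hN φ θ j) - cos (sVar N hN φ θ p) -
        cos (sVar N hN φ θ (σ j)) := by linarith [hub p, hub (σ j)]
    nlinarith [mul_nonneg (sub_nonneg.mpr (cos_le_one t)) hneighbours]
  · intro x hxp hxj hxq
    have hσx : σ x ≠ j := fun h => hxp (σ.injective (h.trans hσp.symm))
    simp only [Pi.sub_apply, Pi.smul_apply, smul_eq_mul, Pi.single_apply, σ.injective.eq_iff, hσx,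
      hxj, hxq, if_false, mul_zero, add_zero, sub_self]

theorem IsStationaryPt.not_isLocalMin_fxyFixed (hstat : IsStationaryPt N hN φ θ) (hN3 : 3 ≤ N)
    (hlast : θ (lastIdx N hN) = 0) {j : Fin N} (hj : cos (sVar N hN φ θ j) ≤ 0) :
    ¬ IsLocalMin (FxyFixed N hN φ) θ := by
  intro hmin
  have hub (k : Fin N) : cos (sVar N hN φ θ k) ≤ -cos (sVar N hN φ θ j) := by
    have := (sq_eq_sq_iff_abs_eq_abs _ _).mp
      ((hstat.cos_sq_sVar_eq k).trans (hstat.cos_sq_sVar_eq j).symm)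
    rw [abs_of_nonpos hj] at this
    exact this ▸ le_abs_self _
  have hcS : (-cos (sVar N hN φ θ j)) ^ 2 + sin (sVar N hN φ θ (lastIdx N hN)) ^ 2 = 1 := by
    rw [← hstat.sin_sVar_eq j, neg_sq, cos_sq_add_sin_sq]
  obtain ⟨t, hdescent, hle⟩ :=
    ((frequently_one_sub_cos_mul_pos (neg_nonneg.mpr hj) hcS).and_eventually
      (hmin.fxy_line hlast (Pi.single (finRotate N j) 1 - Pi.single j 1))).exists
  have := hstat.fxy_stretch_sub_le hN3 j hub t
  simp only [zero_smul, add_zero] at hle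
  linarith

theorem IsStationaryPt.cos_sVar_pos_iff (hstat : IsStationaryPt N hN φ θ) :
    (∀ k, 0 < cos (sVar N hN φ θ k)) ↔
      (∀ k : Fin N, (k : ℕ) < N - 1 →
        cos (sVar N hN φ θ k) = cos (sVar N hN φ θ (lastIdx N hN))) ∧
      0 < cos (sVar N hN φ θ (lastIdx N hN)) := by
  refine ⟨fun hpos => ⟨fun k _ => hstat.cos_sVar_eq_of_pos (hpos k) (hpos _), hpos _⟩, ?_⟩
  rintro ⟨hcos, hlast⟩ k
  rcases lt_or_ge (k : ℕ) (N - 1) with hk | hk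
  · rwa [hcos k hk]
  · rwa [show k = lastIdx N hN from Fin.ext (by simp only [lastIdx]; omega)]

theorem IsStationaryPt.exists_int_iff_cos_eq (hstat : IsStationaryPt N hN φ θ) (k : Fin N) :
    (∃ m : ℤ, sVar N hN φ θ k = sVar N hN φ θ (lastIdx N hN) + 2 * π * m) ↔
      cos (sVar N hN φ θ k) = cos (sVar N hN φ θ (lastIdx N hN)) := by
  refine ⟨fun ⟨m, hm⟩ => by rw [hm, mul_comm, cos_add_int_mul_two_pi], fun h => ?_⟩
  have hcos_sub : cos (sVar N hN φ θ k - sVar N hN φ θ (lastIdx N hN)) = 1 := by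
    rw [cos_sub, h, hstat.sin_sVar_eq k, ← sq, ← sq, cos_sq_add_sin_sq]
  obtain ⟨m, hm⟩ := (cos_eq_one_iff _).mp hcos_sub
  exact ⟨m, by linarith⟩

end

/-- Theorem 1: for odd `N`, a stationary point `θ` (with `θ_N = 0`)
of `F_φ` is a local minimum iff `cos s_k > 0` for all `k = 1, …, N`; equivalently,
iff `q_k = 0` for all `k = 1, …, N-1` (i.e. `s_k ≡ s_N (mod 2π)`) and `cos s_N > 0`. -/
theorem stmt4 (N : ℕ) (hN : 3 ≤ N) (φ θ : Fin N → ℝ)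
    (hlast : θ (lastIdx N (by omega)) = 0)
    (hstat : IsStationaryPt N (by omega) φ θ) :
    (IsLocalMin (FxyFixed N (by omega) φ) θ ↔
      ∀ k : Fin N, 0 < Real.cos (sVar N (by omega) φ θ k)) ∧
    ((∀ k : Fin N, 0 < Real.cos (sVar N (by omega) φ θ k)) ↔
      ((∀ k : Fin N, (k : ℕ) < N - 1 →
          ∃ m : ℤ, sVar N (by omega) φ θ k =
            sVar N (by omega) φ θ (lastIdx N (by omega)) + 2 * π * m) ∧
        0 < Real.cos (sVar N (by omega) φ θ (lastIdx N (by omega))))) := by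
  refine ⟨⟨fun hmin k => lt_of_not_ge fun hk => hstat.not_isLocalMin_fxyFixed hN hlast hk hmin,
    fun hpos => (hstat.isLocalMin_fxy hpos).fxyFixed hlast⟩, ?_⟩
  simp only [hstat.exists_int_iff_cos_eq]
  exact hstat.cos_sVar_pos_iff
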